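/- Let σ be a non-polynomial C^∞ function and let A₁,...,A_n: K → R be continuous functions lying in a vector space V ⊆ C(K,R) that contains constants, such that σ∘f ∈ W for every f ∈ V, where W is a uniformly closed vector space closed under differentiation with respect to parameters. Then the pointwise product A₁·A₂·⋯·A_n lies in W. (Proof sketch: differentiate σ(Σ a_i A_i + δ) with respect to a₁,...,a_n at a_i = 0, δ = δ₀ with σ^{(n)}(δ₀) ≠ 0.) -/

import Mathlib

open scoped ContDiff

lemma taylor_bound_aux {φ φ' φ'' : ℝ → ℝ} (h1 : ∀ x, HasDerivAt φ (φ' x) x)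
    (h2 : ∀ x, HasDerivAt φ' (φ'' x) x) {a b L : ℝ}
    (hL : ∀ s ∈ Set.Icc a b, |φ'' s| ≤ L) {u v : ℝ}
    (hu : u ∈ Set.Icc a b) (hv : v ∈ Set.Icc a b) :
    |φ v - φ u - (v - u) * φ' u| ≤ L * |v - u| * |v - u| := by
  have hL0 : 0 ≤ L := le_trans (abs_nonneg _) (hL u hu)
  set J := Set.Icc (u ⊓ v) (u ⊔ v) with hJ
  have hJI : J ⊆ Set.Icc a b := fun s hs =>
    ⟨le_trans (le_min hu.1 hv.1) hs.1, le_trans hs.2 (max_le hu.2 hv.2)⟩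
  have hlip : ∀ s ∈ J, ‖φ' s - φ' u‖ ≤ L * |v - u| := by
    intro s hs
    have key : ‖φ' s - φ' u‖ ≤ L * ‖s - u‖ :=
      Convex.norm_image_sub_le_of_norm_hasDerivWithin_le
        (fun x _ => (h2 x).hasDerivWithinAt) hL (convex_Icc a b) hu (hJI hs)
    have hs1 : u - |v - u| ≤ s :=
      le_trans (le_min (by linarith [abs_nonneg (v - u)]) (by linarith [neg_abs_le (v - u)])) hs.1
    have hs2 : s ≤ u + |v - u| :=
      le_trans hs.2 (max_le (by linarith [abs_nonneg (v - u)]) (by linarith [le_abs_self (v - u)]))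
    have hsu : ‖s - u‖ ≤ |v - u| := by
      rw [Real.norm_eq_abs]; exact abs_le.mpr ⟨by linarith, by linarith⟩
    exact le_trans key (mul_le_mul_of_nonneg_left hsu hL0)
  have hg : ∀ s ∈ J, HasDerivWithinAt (fun x => φ x - x * φ' u) (φ' s - φ' u) J s :=
    fun s _ => ((h1 s).sub (hasDerivAt_mul_const (φ' u))).hasDerivWithinAt
  have := Convex.norm_image_sub_le_of_norm_hasDerivWithin_le hg hlip (convex_Icc _ _)
    (Set.mem_Icc.mpr ⟨inf_le_left, le_sup_left⟩) (Set.mem_Icc.mpr ⟨inf_le_right, le_sup_right⟩)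
  have heq : φ v - v * φ' u - (φ u - u * φ' u) = φ v - φ u - (v - u) * φ' u := by ring
  rw [Real.norm_eq_abs, Real.norm_eq_abs, heq] at this
  linarith [this, mul_le_mul_of_nonneg_left (le_refl |v - u|) hL0]



/-- The Hadamard-product lemma for CNN universality. Let `σ` be a non-polynomial
`C^∞` function (for each `n` there is `δ₀` with `σ⁽ⁿ⁾(δ₀) ≠ 0`). Let `K` be a
compact space, `V` a vector space of functions `K → ℝ` containing the constants
and containing the continuous functions `A₁, …, Aₙ`, and let `W` be a uniformly
closed vector space of functions with `σ ∘ f ∈ W` for every `f ∈ V`. Then the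
pointwise product `A₁ ⋯ Aₙ` lies in `W`. -/
theorem hadamard_product_mem (X : Type*) [TopologicalSpace X] [CompactSpace X]
    (σ : ℝ → ℝ) (hσ : ContDiff ℝ (⊤ : ℕ∞) σ)
    (hσnp : ∀ n : ℕ, ∃ δ₀ : ℝ, iteratedDeriv n σ δ₀ ≠ 0)
    (V W : Submodule ℝ (X → ℝ))
    (hconst : ∀ r : ℝ, (fun _ : X => r) ∈ V)
    (hWclosed : ∀ h : X → ℝ,
      (∀ ε > 0, ∃ g ∈ W, ∀ x : X, |h x - g x| ≤ ε) → h ∈ W)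
    (hσVW : ∀ f ∈ V, (fun x => σ (f x)) ∈ W)
    (n : ℕ) (A : Fin n → X → ℝ)
    (hAc : ∀ i, Continuous (A i)) (hAV : ∀ i, A i ∈ V) :
    (fun x => ∏ i, A i x) ∈ W := by
    -- iterated derivatives of σ
  have hD : ∀ m : ℕ, ContDiff ℝ ∞ (iteratedDeriv m σ) := by
    intro m
    rw [iteratedDeriv_eq_iterate]
    exact (hσ.of_le (by simp)).iterate_deriv m
  have hDd : ∀ (m : ℕ) (x : ℝ), HasDerivAt (iteratedDeriv m σ) (iteratedDeriv (m + 1) σ x) x := by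
    intro m x
    rw [iteratedDeriv_succ]
    exact ((hD m).differentiable (by simp) x).hasDerivAt
  -- boundedness of continuous functions on X
  have bdd : ∀ g : X → ℝ, Continuous g → ∃ M, ∀ x, |g x| ≤ M := by
    intro g hg
    obtain ⟨C, hC⟩ := isCompact_univ.exists_bound_of_continuousOn hg.continuousOn
    exact ⟨C, fun x => hC x (Set.mem_univ x)⟩
  -- main induction
  have key : ∀ S : Finset (Fin n), ∀ f : X → ℝ, f ∈ V → Continuous f →
      (fun x => iteratedDeriv S.card σ (f x) * ∏ i ∈ S, A i x) ∈ W := by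
    intro S
    induction S using Finset.induction_on with
    | empty =>
      intro f hfV hfc
      simpa using hσVW f hfV
    | @insert j S hj ih =>
      intro f hfV hfc
      rw [Finset.card_insert_of_notMem hj]
      apply hWclosed
      intro ε hε
      set k := S.card with hk
      -- bounds
      obtain ⟨Mf, hMf⟩ := bdd f hfc
      obtain ⟨Ma, hMa⟩ := bdd (A j) (hAc j)
      obtain ⟨Mp, hMp⟩ := bdd (fun x => ∏ i ∈ S, A i x)
        (continuous_finset_prod S fun i _ => hAc i)
      set M : ℝ := max 1 (max Mf (max Ma Mp)) with hM
      have hM1 : (1 : ℝ) ≤ M := le_max_left _ _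
      have hM0 : (0 : ℝ) < M := lt_of_lt_of_le one_pos hM1
      have hMf' : ∀ x, |f x| ≤ M := fun x => le_trans (hMf x) (le_trans (le_max_left _ _) (le_max_right _ _))
      have hMa' : ∀ x, |A j x| ≤ M := fun x => le_trans (hMa x)
        (le_trans (le_trans (le_max_left _ _) (le_max_right _ _)) (le_max_right _ _))
      have hMp' : ∀ x, |∏ i ∈ S, A i x| ≤ M := fun x => le_trans (hMp x)
        (le_trans (le_trans (le_max_right _ _) (le_max_right _ _)) (le_max_right _ _))
      -- bound on the (k+2)-nd derivative on [-2M, 2M]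
      obtain ⟨L₀, hL₀⟩ := isCompact_Icc.exists_bound_of_continuousOn
        ((hD (k + 2)).continuous.continuousOn (s := Set.Icc (-(2 * M)) (2 * M)))
      set L : ℝ := max L₀ 0 with hL
      have hLb : ∀ s ∈ Set.Icc (-(2 * M)) (2 * M), |iteratedDeriv (k + 2) σ s| ≤ L :=
        fun s hs => le_trans (hL₀ s hs) (le_max_left _ _)
      have hL0 : 0 ≤ L := le_max_right _ _
      -- choice of step size
      set δ : ℝ := min 1 (ε / (L * M ^ 3 + 1)) with hδ
      have hden : (0 : ℝ) < L * M ^ 3 + 1 := by positivity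
      have hδ0 : 0 < δ := lt_min one_pos (div_pos hε hden)
      have hδ1 : δ ≤ 1 := min_le_left _ _
      have hδ2 : δ ≤ ε / (L * M ^ 3 + 1) := min_le_right _ _
      -- the approximating element of W
      have hfV' : (fun x => f x + δ * A j x) ∈ V := V.add_mem hfV (V.smul_mem δ (hAV j))
      have hfc' : Continuous fun x => f x + δ * A j x := hfc.add (continuous_const.mul (hAc j))
      refine ⟨δ⁻¹ • ((fun x => iteratedDeriv k σ (f x + δ * A j x) * ∏ i ∈ S, A i x)
          - fun x => iteratedDeriv k σ (f x) * ∏ i ∈ S, A i x),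
        W.smul_mem _ (W.sub_mem (ih _ hfV' hfc') (ih _ hfV hfc)), ?_⟩
      intro x
      rw [Finset.prod_insert hj]
      set u : ℝ := f x with hu
      set t : ℝ := δ * A j x with ht
      set P : ℝ := ∏ i ∈ S, A i x with hP
      have hmemu : u ∈ Set.Icc (-(2 * M)) (2 * M) := by
        have := hMf' x
        constructor <;> [linarith [abs_le.mp this]; linarith [abs_le.mp this]]
      have htle : |t| ≤ δ * M := by
        rw [ht, abs_mul, abs_of_pos hδ0]
        exact mul_le_mul_of_nonneg_left (hMa' x) hδ0.le
      have hmemv : u + t ∈ Set.Icc (-(2 * M)) (2 * M) := by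
        have h1 := abs_le.mp (hMf' x)
        have h2 : |t| ≤ M := le_trans htle (by nlinarith)
        have h3 := abs_le.mp h2
        constructor <;> linarith
      -- Taylor estimate
      have htay := taylor_bound_aux (φ := iteratedDeriv k σ) (hDd k) (hDd (k + 1)) hLb hmemu hmemv
      rw [add_sub_cancel_left] at htay
      -- final computation
      have habs : |iteratedDeriv (k + 1) σ u * (A j x * P) -
          δ⁻¹ * ((iteratedDeriv k σ (u + t) * P) - iteratedDeriv k σ u * P)| ≤ ε := by
        have hrw : iteratedDeriv (k + 1) σ u * (A j x * P) -
            δ⁻¹ * ((iteratedDeriv k σ (u + t) * P) - iteratedDeriv k σ u * P)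
            = -(δ⁻¹ * P) * (iteratedDeriv k σ (u + t) - iteratedDeriv k σ u
              - t * iteratedDeriv (k + 1) σ u) := by
          rw [ht]
          field_simp
          ring
        rw [hrw, abs_mul, abs_neg, abs_mul, abs_inv, abs_of_pos hδ0]
        have hbound : |iteratedDeriv k σ (u + t) - iteratedDeriv k σ u
            - t * iteratedDeriv (k + 1) σ u| ≤ L * (δ * M) * (δ * M) := by
          refine le_trans htay ?_
          have h1 : |t| ≤ δ * M := htle
          have h2 : 0 ≤ |t| := abs_nonneg _
          have h3 : |t| * |t| ≤ (δ * M) * (δ * M) := mul_le_mul h1 h1 h2 (by positivity)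
          nlinarith [mul_le_mul_of_nonneg_left h3 hL0]
        calc δ⁻¹ * |P| * |iteratedDeriv k σ (u + t) - iteratedDeriv k σ u
              - t * iteratedDeriv (k + 1) σ u|
            ≤ δ⁻¹ * M * (L * (δ * M) * (δ * M)) := by
              apply mul_le_mul (mul_le_mul_of_nonneg_left (hMp' x) (inv_nonneg.mpr hδ0.le)) hbound
                (abs_nonneg _)
              positivity
          _ = L * M ^ 3 * δ := by field_simp
          _ ≤ ε := by
              have hδε : δ * (L * M ^ 3 + 1) ≤ ε := (le_div_iff₀ hden).mp hδ2
              nlinarith [hδ0.le]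
      simpa using habs
  -- conclude
  obtain ⟨δ₀, hδ₀⟩ := hσnp n
  have h1 := key Finset.univ (fun _ => δ₀) (hconst δ₀) continuous_const
  rw [Finset.card_univ, Fintype.card_fin] at h1
  have h2 := W.smul_mem (iteratedDeriv n σ δ₀)⁻¹ h1
  have h3 : (iteratedDeriv n σ δ₀)⁻¹ • (fun x => iteratedDeriv n σ δ₀ * ∏ i, A i x)
      = fun x => ∏ i, A i x := by
    funext x
    simp [smul_eq_mul, ← mul_assoc, inv_mul_cancel₀ hδ₀]
  rwa [h3] at h2
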